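/- arXiv:1710.01372 — 2 statements merged into one kernel-verified Lean document; each statement's English description precedes it below -/
import Mathlib

section
/- Suppose ∫‖x‖² dρ(x) < ∞, let μ : ℝ → ℝ^m be a version of the conditional expectation of x given f, and let (φ_i)_{i∈ℕ} be a Hilbert basis of L²(γ) represented by Borel functions. Define c_i ∈ ℝ^m by c_i = ∫_{ℝ^m} x · φ_i(f(x)) dρ(x) for i ∈ ℕ. Then the family i ↦ c_i c_iᵀ is entrywise summable and ∫_ℝ μ(y) μ(y)ᵀ dγ(y) = Σ_{i=0}^∞ c_i c_iᵀ. -/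
/-!
Since `μ ∘ f` is the conditional expectation of `x` given `f`, each coordinate `μ_j` lies in
`L²(γ)` and `⟪μ_j, φ_i⟫_{L²(γ)} = ∫ μ_j(f x) φ_i(f x) dρ = ∫ x_j φ_i(f x) dρ = (c_i)_j`, because
`φ_i ∘ f` is `σ(f)`-measurable and can be pulled into the conditional expectation. The claim is
then Parseval's identity `⟪μ_p, μ_q⟫ = ∑ ⟪μ_p, φ_i⟫ ⟪φ_i, μ_q⟫` for the Hilbert basis `(φ_i)`.
-/

open MeasureTheory

namespace MeasureTheory

theorem integral_mul_condExp_of_stronglyMeasurable {Ω : Type*} {m m₀ : MeasurableSpace Ω}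
    {μ : Measure Ω} (hm : m ≤ m₀) [SigmaFinite (μ.trim hm)] {f g : Ω → ℝ}
    (hg : StronglyMeasurable[m] g) (hgf : Integrable (g * f) μ) (hf : Integrable f μ) :
    ∫ ω, g ω * (μ[f|m]) ω ∂μ = ∫ ω, g ω * f ω ∂μ :=
  calc ∫ ω, g ω * (μ[f|m]) ω ∂μ = ∫ ω, (μ[g * f|m]) ω ∂μ :=
        integral_congr_ae (condExp_mul_of_stronglyMeasurable_left hg hgf hf).symm
    _ = ∫ ω, g ω * f ω ∂μ := integral_condExp hm

theorem MemLp.inner_toLp_eq_integral {α : Type*} [MeasurableSpace α] {μ : Measure α}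
    {u v : α → ℝ} (hu : MemLp u 2 μ) (hv : MemLp v 2 μ) :
    inner ℝ (hu.toLp u) (hv.toLp v) = ∫ a, u a * v a ∂μ := by
  rw [L2.inner_def]
  refine integral_congr_ae ?_
  filter_upwards [hu.coeFn_toLp, hv.coeFn_toLp] with a hua hva
  simp [hua, hva, mul_comm]

section Pushforward

variable {Ω β : Type*} [MeasurableSpace Ω] [MeasurableSpace β] {ρ : Measure Ω} {f : Ω → β}
  {X : Ω → ℝ} {h : β → ℝ}

theorem memLp_map_of_comp_ae_eq_condExp (hf : Measurable f) (hh : Measurable h)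
    {p : ENNReal} (hp : 1 ≤ p) (hX : MemLp X p ρ)
    (hcond : (fun x => h (f x)) =ᵐ[ρ] ρ[X | MeasurableSpace.comap f ‹_›]) :
    MemLp h p (ρ.map f) :=
  (memLp_map_measure_iff hh.aestronglyMeasurable hf.aemeasurable).2
    ((hX.condExp hp).ae_eq hcond.symm)

theorem integral_mul_eq_integral_mul_comp_of_comp_ae_eq_condExp [IsFiniteMeasure ρ]
    (hf : Measurable f) (hh : Measurable h) (hX : MemLp X 2 ρ)
    (hcond : (fun x => h (f x)) =ᵐ[ρ] ρ[X | MeasurableSpace.comap f ‹_›])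
    {φ : β → ℝ} (hφ : Measurable φ) (hφ2 : MemLp φ 2 (ρ.map f)) :
    ∫ y, h y * φ y ∂(ρ.map f) = ∫ x, X x * φ (f x) ∂ρ := by
  have hφf : MemLp (φ ∘ f) 2 ρ :=
    (memLp_map_measure_iff hφ.aestronglyMeasurable hf.aemeasurable).1 hφ2
  calc ∫ y, h y * φ y ∂(ρ.map f)
        = ∫ x, φ (f x) * (ρ[X | MeasurableSpace.comap f ‹_›]) x ∂ρ := by
        rw [integral_map (f := fun y => h y * φ y) hf.aemeasurable
          (hh.mul hφ).aestronglyMeasurable]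
        refine integral_congr_ae ?_
        filter_upwards [hcond] with x hx
        rw [← hx, mul_comm]
    _ = ∫ x, φ (f x) * X x ∂ρ :=
        integral_mul_condExp_of_stronglyMeasurable (g := fun x => φ (f x)) hf.comap_le
          (hφ.comp (comap_measurable f)).stronglyMeasurable (hφf.integrable_mul hX)
          (hX.integrable one_le_two)
    _ = ∫ x, X x * φ (f x) ∂ρ := by simp_rw [mul_comm]

end Pushforward

end MeasureTheory

theorem stmt3_general (m : ℕ)
    (ρ : Measure (EuclideanSpace ℝ (Fin m))) [IsProbabilityMeasure ρ]
    (f : EuclideanSpace ℝ (Fin m) → ℝ) (hf : Measurable f)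
    (γ : Measure ℝ) (hγ : γ = Measure.map f ρ)
    (hx2 : Integrable (fun x => ‖x‖ ^ 2) ρ)
    (μ : ℝ → EuclideanSpace ℝ (Fin m)) (hμ : Measurable μ)
    (hcond : ∀ j : Fin m,
      (fun x => μ (f x) j) =ᵐ[ρ] ρ[fun x => x j | MeasurableSpace.comap f (borel ℝ)])
    (φ : ℕ → ℝ → ℝ) (hφmeas : ∀ i, Measurable (φ i))
    (hφ : ∀ i, MemLp (φ i) 2 γ)
    (b : HilbertBasis ℕ ℝ (Lp ℝ 2 γ))
    (hb : ∀ i, (b i : Lp ℝ 2 γ) = (hφ i).toLp (φ i))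
    (c : ℕ → Fin m → ℝ)
    (hc : ∀ i j, c i j = ∫ x, x j * φ i (f x) ∂ρ) :
    ∀ p q : Fin m,
      Summable (fun i => c i p * c i q) ∧
      ∫ y, μ y p * μ y q ∂γ = ∑' i, c i p * c i q := by
  subst hγ
  have hcoord (j : Fin m) : MemLp (fun x : EuclideanSpace ℝ (Fin m) => x j) 2 ρ :=
    (EuclideanSpace.proj (𝕜 := ℝ) j).comp_memLp'
      ((memLp_two_iff_integrable_sq_norm aestronglyMeasurable_id).2 hx2)
  have hμ_meas (j : Fin m) : Measurable fun y => μ y j :=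
    (EuclideanSpace.proj (𝕜 := ℝ) j).continuous.measurable.comp hμ
  have hμ2 (j : Fin m) : MemLp (fun y => μ y j) 2 (ρ.map f) :=
    memLp_map_of_comp_ae_eq_condExp hf (hμ_meas j) one_le_two (hcoord j) (hcond j)
  have hcoeff (i : ℕ) (j : Fin m) : inner ℝ ((hμ2 j).toLp _) (b i) = c i j := by
    rw [hb, (hμ2 j).inner_toLp_eq_integral, hc,
      integral_mul_eq_integral_mul_comp_of_comp_ae_eq_condExp hf (hμ_meas j) (hcoord j) (hcond j)
        (hφmeas i) (hφ i)]
  intro p q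
  have hterms : (fun i => c i p * c i q) =
      fun i => inner ℝ ((hμ2 p).toLp _) (b i) * inner ℝ (b i) ((hμ2 q).toLp _) := by
    funext i
    rw [hcoeff, real_inner_comm, hcoeff]
  rw [hterms, ← (hμ2 p).inner_toLp_eq_integral (hμ2 q)]
  exact ⟨b.summable_inner_mul_inner _ _, (b.tsum_inner_mul_inner _ _).symm⟩

/-- If `∫ ‖x‖² dρ < ∞`, `μ` is a version of the conditional expectation of `x`
given `f`, and `(φ i)` is a Hilbert basis of `L²(γ)` (with `γ = f_*ρ`) represented by Borel
functions, then the vectors `c i` with `(c i) j = ∫ x j * φ i (f x) dρ` satisfy: the family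
`i ↦ c i (c i)ᵀ` is entrywise summable and `∫ μ y μ yᵀ dγ = ∑' i, c i (c i)ᵀ` entrywise. -/
theorem stmt3 (m : ℕ) (hm : 1 ≤ m)
    (ρ : Measure (EuclideanSpace ℝ (Fin m))) [IsProbabilityMeasure ρ]
    (f : EuclideanSpace ℝ (Fin m) → ℝ) (hf : Measurable f)
    (γ : Measure ℝ) (hγ : γ = Measure.map f ρ)
    (hx2 : Integrable (fun x => ‖x‖ ^ 2) ρ)
    (μ : ℝ → EuclideanSpace ℝ (Fin m)) (hμ : Measurable μ)
    (hcond : ∀ j : Fin m,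
      (fun x => μ (f x) j) =ᵐ[ρ] ρ[fun x => x j | MeasurableSpace.comap f (borel ℝ)])
    (φ : ℕ → ℝ → ℝ) (hφmeas : ∀ i, Measurable (φ i))
    (hφ : ∀ i, MemLp (φ i) 2 γ)
    (b : HilbertBasis ℕ ℝ (Lp ℝ 2 γ))
    (hb : ∀ i, (b i : Lp ℝ 2 γ) = (hφ i).toLp (φ i))
    (c : ℕ → Fin m → ℝ)
    (hc : ∀ i j, c i j = ∫ x, x j * φ i (f x) ∂ρ) :
    ∀ p q : Fin m,
      Summable (fun i => c i p * c i q) ∧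
      ∫ y, μ y p * μ y q ∂γ = ∑' i, c i p * c i q :=
  stmt3_general m ρ f hf γ hγ hx2 μ hμ hcond φ hφmeas hφ b hb c hc
end

section
/- Suppose ∫‖x‖⁴ dρ(x) < ∞, let μ : ℝ → ℝ^m be a version of the conditional expectation of x given f, let Σ : ℝ → ℝ^{m×m} be a version of the conditional covariance of x given f, and let (φ_i)_{i∈ℕ} be a Hilbert basis of L²(γ) represented by Borel functions with φ_0 γ-almost everywhere equal to the constant function 1. Define S_i ∈ ℝ^{m×m} by S_i = ∫_{ℝ^m} (x − μ(f(x)))(x − μ(f(x)))ᵀ φ_i(f(x)) dρ(x). Then the family i ↦ S_i S_i is entrywise summable and ∫_ℝ (I − Σ(y))² dγ(y) = I − 2 S_0 + Σ_{i=0}^∞ S_i S_i, where I is the m×m identity matrix. -/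
/-!
By the tower property, `S (f x)` may replace the centred product `(x - μ (f x)) (x - μ (f x))ᵀ`
inside `∫ … φ i (f x) dρ`, so the entries of `C i` are the `L²(γ)`-inner products of the entries
of `S` with `φ i`, and `C 0 = ∫ S dγ`. Expanding `(1 - S)² = 1 - 2 S + S²`, Parseval's identity in
the basis `(φ i)` turns `∫ S_pk S_kq dγ` into `∑ i, (C i)_pk (C i)_kq`. The fourth moment of `ρ`
puts the centred products, hence the entries of `S`, in `L²`.
-/

open MeasureTheory
open scoped ENNReal InnerProductSpace

instance ENNReal.HolderTriple.instFourFourTwo : ENNReal.HolderTriple 4 4 2 where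
  inv_add_inv_eq_inv := by
    rw [← two_mul, show (4 : ℝ≥0∞) = 2 * 2 by norm_num, ENNReal.mul_inv (by simp) (by simp),
      ← mul_assoc, ENNReal.mul_inv_cancel (by simp) (by simp), one_mul]

lemma EuclideanSpace.memLp_apply_of_integrable_norm_pow {ι : Type*} [Fintype ι]
    {ρ : Measure (EuclideanSpace ℝ ι)} {n : ℕ} (hn : n ≠ 0)
    (h : Integrable (fun x => ‖x‖ ^ n) ρ) (j : ι) : MemLp (fun x => x j) n ρ := by
  have hid : MemLp id n ρ := by
    rw [← integrable_norm_rpow_iff aestronglyMeasurable_id (by simpa using hn) (by simp)]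
    simpa using h
  exact (EuclideanSpace.proj j : EuclideanSpace ℝ ι →L[ℝ] ℝ).comp_memLp' hid

lemma integral_mul_comp_eq_integral_map_of_condExp {α β : Type*} [MeasurableSpace α]
    [MeasurableSpace β] {ρ : Measure α} [IsFiniteMeasure ρ] {g : α → β} (hg : Measurable g)
    {h : α → ℝ} {s ψ : β → ℝ} (hs : Measurable s) (hψ : Measurable ψ)
    (hh : MemLp h 2 ρ) (hψ2 : MemLp ψ 2 (ρ.map g))
    (hcond : (fun x => s (g x)) =ᵐ[ρ] ρ[h | MeasurableSpace.comap g ‹_›]) :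
    ∫ x, h x * ψ (g x) ∂ρ = ∫ y, s y * ψ y ∂ρ.map g := by
  have hψg : MemLp (fun x => ψ (g x)) 2 ρ :=
    (memLp_map_measure_iff hψ.aestronglyMeasurable hg.aemeasurable).mp hψ2
  have hψg_meas : StronglyMeasurable[MeasurableSpace.comap g ‹_›] (fun x => ψ (g x)) :=
    (hψ.comp (comap_measurable g)).stronglyMeasurable
  have hpull : ρ[fun x => h x * ψ (g x) | MeasurableSpace.comap g ‹_›]
      =ᵐ[ρ] fun x => s (g x) * ψ (g x) := by
    filter_upwards [condExp_mul_of_stronglyMeasurable_right hψg_meas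
      (memLp_one_iff_integrable.mp (hψg.mul' hh)) (hh.integrable one_le_two), hcond]
      with x hx hsx
    exact hx.trans (congrArg (· * ψ (g x)) hsx.symm)
  calc ∫ x, h x * ψ (g x) ∂ρ
      = ∫ x, ρ[fun x => h x * ψ (g x) | MeasurableSpace.comap g ‹_›] x ∂ρ :=
        (integral_condExp hg.comap_le).symm
    _ = ∫ x, s (g x) * ψ (g x) ∂ρ := integral_congr_ae hpull
    _ = ∫ y, s y * ψ y ∂ρ.map g :=
        (integral_map hg.aemeasurable (hs.mul hψ).aestronglyMeasurable).symm

section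

variable {β : Type*} [MeasurableSpace β] {ν : Measure β}

lemma integral_mul_eq_inner_toLp {u v : β → ℝ} (hu : MemLp u 2 ν) (hv : MemLp v 2 ν) :
    ∫ y, u y * v y ∂ν = ⟪hu.toLp u, hv.toLp v⟫_ℝ := by
  rw [L2.inner_def]
  refine integral_congr_ae ?_
  filter_upwards [hu.coeFn_toLp, hv.coeFn_toLp] with y hu' hv'
  simp [hu', hv', mul_comm]

lemma HilbertBasis.hasSum_integral_mul_mul_integral_mul {ι : Type*} {φ : ι → β → ℝ}
    (hφ : ∀ i, MemLp (φ i) 2 ν) (b : HilbertBasis ι ℝ (Lp ℝ 2 ν))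
    (hb : ∀ i, (b i : Lp ℝ 2 ν) = (hφ i).toLp (φ i)) {u v : β → ℝ}
    (hu : MemLp u 2 ν) (hv : MemLp v 2 ν) :
    HasSum (fun i => (∫ y, u y * φ i y ∂ν) * ∫ y, v y * φ i y ∂ν) (∫ y, u y * v y ∂ν) := by
  have hcoeff : ∀ {w : β → ℝ} (hw : MemLp w 2 ν) (i : ι),
      ∫ y, w y * φ i y ∂ν = ⟪hw.toLp w, b i⟫_ℝ := fun hw i => by
    rw [hb]; exact integral_mul_eq_inner_toLp hw (hφ i)
  simp only [hcoeff hu, hcoeff hv, integral_mul_eq_inner_toLp hu hv]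
  simpa only [real_inner_comm (b _) (hv.toLp v)] using b.hasSum_inner_mul_inner _ _

lemma integral_one_sub_mul_one_sub_apply {n : Type*} [Fintype n] [DecidableEq n]
    [IsProbabilityMeasure ν] {S : β → Matrix n n ℝ} (hS : ∀ p q, MemLp (fun y => S y p q) 2 ν)
    (p q : n) :
    ∫ y, ((1 - S y) * (1 - S y)) p q ∂ν =
      (1 : Matrix n n ℝ) p q - 2 * ∫ y, S y p q ∂ν + ∑ k, ∫ y, S y p k * S y k q ∂ν := by
  have hexpand : ∀ y, ((1 - S y) * (1 - S y)) p q =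
      (1 : Matrix n n ℝ) p q - 2 * S y p q + ∑ k, S y p k * S y k q := by
    intro y
    rw [show (1 - S y) * (1 - S y) = 1 - S y - S y + S y * S y by noncomm_ring]
    simp only [Matrix.add_apply, Matrix.sub_apply, Matrix.mul_apply]
    ring
  have hint : ∀ j k, Integrable (fun y => S y p j * S y j k) ν := fun j k =>
    memLp_one_iff_integrable.mp ((hS j k).mul' (hS p j))
  simp only [hexpand]
  generalize (1 : Matrix n n ℝ) p q = c
  have hSpq : Integrable (fun y => 2 * S y p q) ν := ((hS p q).integrable one_le_two).const_mul 2
  have hcSpq : Integrable (fun y => c - 2 * S y p q) ν := (integrable_const c).sub hSpq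
  rw [integral_add hcSpq (integrable_finsetSum _ fun k _ => hint k q),
    integral_sub (integrable_const _) hSpq, integral_const_mul,
    integral_finsetSum _ fun k _ => hint k q]
  simp

end

lemma Matrix.hasSum_mul_apply {ι n : Type*} [Fintype n] {C D : ι → Matrix n n ℝ}
    {a : n → ℝ} {p q : n} (h : ∀ k, HasSum (fun i => C i p k * D i k q) (a k)) :
    HasSum (fun i => (C i * D i) p q) (∑ k, a k) := by
  simpa only [Matrix.mul_apply] using hasSum_sum fun k _ => h k

theorem stmt7_general (m : ℕ)
    (ρ : Measure (EuclideanSpace ℝ (Fin m))) [IsProbabilityMeasure ρ]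
    (f : EuclideanSpace ℝ (Fin m) → ℝ) (hf : Measurable f)
    (γ : Measure ℝ) (hγ : γ = Measure.map f ρ)
    (hx4 : Integrable (fun x => ‖x‖ ^ 4) ρ)
    (μ : ℝ → EuclideanSpace ℝ (Fin m))
    (hcond : ∀ j : Fin m,
      (fun x => μ (f x) j) =ᵐ[ρ] ρ[fun x => x j | MeasurableSpace.comap f (borel ℝ)])
    (S : ℝ → Matrix (Fin m) (Fin m) ℝ)
    (hSmeas : ∀ p q : Fin m, Measurable (fun y => S y p q))
    (hcov : ∀ p q : Fin m,
      (fun x => S (f x) p q) =ᵐ[ρ]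
        ρ[fun x => (x p - μ (f x) p) * (x q - μ (f x) q) |
          MeasurableSpace.comap f (borel ℝ)])
    (φ : ℕ → ℝ → ℝ) (hφmeas : ∀ i, Measurable (φ i))
    (hφ : ∀ i, MemLp (φ i) 2 γ)
    (b : HilbertBasis ℕ ℝ (Lp ℝ 2 γ))
    (hb : ∀ i, (b i : Lp ℝ 2 γ) = (hφ i).toLp (φ i))
    (hφ0 : φ 0 =ᵐ[γ] fun _ => (1 : ℝ))
    (C : ℕ → Matrix (Fin m) (Fin m) ℝ)
    (hC : ∀ i (p q : Fin m),
      C i p q = ∫ x, (x p - μ (f x) p) * (x q - μ (f x) q) * φ i (f x) ∂ρ) :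
    ∀ p q : Fin m,
      Summable (fun i => (C i * C i) p q) ∧
      ∫ y, ((1 - S y) * (1 - S y)) p q ∂γ =
        (1 : Matrix (Fin m) (Fin m) ℝ) p q - 2 * C 0 p q + ∑' i, (C i * C i) p q := by
  subst hγ
  have := Measure.isProbabilityMeasure_map (μ := ρ) hf.aemeasurable
  have hcoord := EuclideanSpace.memLp_apply_of_integrable_norm_pow (n := 4) (by norm_num) hx4
  have hdev : ∀ j, MemLp (fun x => x j - μ (f x) j) 4 ρ := fun j =>
    (hcoord j).sub (((hcoord j).condExp (by norm_num)).ae_eq (hcond j).symm)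
  have hprod : ∀ p q, MemLp (fun x => (x p - μ (f x) p) * (x q - μ (f x) q)) 2 ρ :=
    fun p q => (hdev q).mul' (hdev p)
  have hS : ∀ p q, MemLp (fun y => S y p q) 2 (ρ.map f) := fun p q =>
    (memLp_map_measure_iff (hSmeas p q).aestronglyMeasurable hf.aemeasurable).mpr
      (((hprod p q).condExp one_le_two).ae_eq (hcov p q).symm)
  have hCS : ∀ i p q, C i p q = ∫ y, S y p q * φ i y ∂ρ.map f := fun i p q =>
    (hC i p q).trans (integral_mul_comp_eq_integral_map_of_condExp hf (hSmeas p q) (hφmeas i)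
      (hprod p q) (hφ i) (hcov p q))
  intro p q
  have hsum : HasSum (fun i => (C i * C i) p q) (∑ k, ∫ y, S y p k * S y k q ∂ρ.map f) := by
    refine Matrix.hasSum_mul_apply fun k => ?_
    simp only [hCS]
    exact b.hasSum_integral_mul_mul_integral_mul hφ hb (hS p k) (hS k q)
  have hC0 : C 0 p q = ∫ y, S y p q ∂ρ.map f :=
    (hCS 0 p q).trans (integral_congr_ae (hφ0.mono fun y hy => by simp [hy]))
  refine ⟨hsum.summable, ?_⟩
  rw [hsum.tsum_eq, integral_one_sub_mul_one_sub_apply hS, hC0]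

/-- If `∫ ‖x‖⁴ dρ < ∞`, `μ` is a version of the conditional expectation of `x`
given `f`, `S` is a version of the conditional covariance of `x` given `f`, and `(φ i)` is a
Hilbert basis of `L²(γ)` represented by Borel functions with `φ 0 = 1` γ-a.e., then the
matrices `C i` with `(C i) p q = ∫ (x p − μ (f x) p)(x q − μ (f x) q) φ i (f x) dρ` satisfy:
`i ↦ (C i) * (C i)` is entrywise summable and, entrywise,
`∫ (I − S y)² dγ = I − 2 C 0 + ∑' i, (C i) * (C i)`. -/
theorem stmt7 (m : ℕ) (hm : 1 ≤ m)
    (ρ : Measure (EuclideanSpace ℝ (Fin m))) [IsProbabilityMeasure ρ]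
    (f : EuclideanSpace ℝ (Fin m) → ℝ) (hf : Measurable f)
    (γ : Measure ℝ) (hγ : γ = Measure.map f ρ)
    (hx4 : Integrable (fun x => ‖x‖ ^ 4) ρ)
    (μ : ℝ → EuclideanSpace ℝ (Fin m)) (hμ : Measurable μ)
    (hcond : ∀ j : Fin m,
      (fun x => μ (f x) j) =ᵐ[ρ] ρ[fun x => x j | MeasurableSpace.comap f (borel ℝ)])
    (S : ℝ → Matrix (Fin m) (Fin m) ℝ)
    (hSmeas : ∀ p q : Fin m, Measurable (fun y => S y p q))
    (hcov : ∀ p q : Fin m,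
      (fun x => S (f x) p q) =ᵐ[ρ]
        ρ[fun x => (x p - μ (f x) p) * (x q - μ (f x) q) |
          MeasurableSpace.comap f (borel ℝ)])
    (φ : ℕ → ℝ → ℝ) (hφmeas : ∀ i, Measurable (φ i))
    (hφ : ∀ i, MemLp (φ i) 2 γ)
    (b : HilbertBasis ℕ ℝ (Lp ℝ 2 γ))
    (hb : ∀ i, (b i : Lp ℝ 2 γ) = (hφ i).toLp (φ i))
    (hφ0 : φ 0 =ᵐ[γ] fun _ => (1 : ℝ))
    (C : ℕ → Matrix (Fin m) (Fin m) ℝ)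
    (hC : ∀ i (p q : Fin m),
      C i p q = ∫ x, (x p - μ (f x) p) * (x q - μ (f x) q) * φ i (f x) ∂ρ) :
    ∀ p q : Fin m,
      Summable (fun i => (C i * C i) p q) ∧
      ∫ y, ((1 - S y) * (1 - S y)) p q ∂γ =
        (1 : Matrix (Fin m) (Fin m) ℝ) p q - 2 * C 0 p q + ∑' i, (C i * C i) p q :=
  stmt7_general m ρ f hf γ hγ hx4 μ hcond S hSmeas hcov φ hφmeas hφ b hb hφ0 C hC
end
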